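/- The fundamental matrix Φ(t, T) of the linear time-varying system ẋ = −L(s)x, where L(s) is the Laplacian of a nonnegative locally integrable weight matrix A(s), is row-stochastic: all entries of Φ(t,T) are nonnegative and each row sums to 1. -/

import Mathlib

/-!
Row sums: the constant state `𝟙` is a solution because `L 𝟙 = 0`, so `Φ 𝟙 = 𝟙`.

Nonnegativity: `Φ i j` is the `i`-th coordinate at time `T` of the solution started at `e_j`, so
it suffices that solutions starting in the nonnegative orthant stay there. Otherwise let `τ` be
the first time at which the overall minimum `μ < 0` is reached, say by `x i`, and take `σ < τ`
with `∫_σ^τ ∑ⱼ aᵢⱼ < 1`. Let `M` be the maximum of `x i` on `[σ, τ]`, attained at `σ₁`. As every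
`x j` stays above `μ`, the integral equation on `[σ₁, τ]` gives `μ - M ≥ (μ - M) ∫_σ₁^τ ∑ⱼ aᵢⱼ`,
hence `M ≤ μ`, contradicting `x i σ > μ`.
-/

open intervalIntegral MeasureTheory Set Filter Topology

theorem exists_first_isMinOn_Icc {α β : Type*} [ConditionallyCompleteLinearOrder α]
    [TopologicalSpace α] [OrderTopology α] [LinearOrder β] [TopologicalSpace β]
    [OrderClosedTopology β] {f : α → β} {t T : α} (htT : t ≤ T) (hf : ContinuousOn f (Icc t T)) :
    ∃ τ ∈ Icc t T, IsMinOn f (Icc t T) τ ∧ ∀ s ∈ Ico t τ, f τ < f s := by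
  obtain ⟨τ₀, hτ₀, hmin⟩ := isCompact_Icc.exists_isMinOn (nonempty_Icc.2 htT) hf
  set S := Icc t T ∩ f ⁻¹' {f τ₀}
  have hS_bdd : BddBelow S := ⟨t, fun s hs => hs.1.1⟩
  obtain ⟨hτ, hfτ : f (sInf S) = f τ₀⟩ : sInf S ∈ S :=
    (hf.preimage_isClosed_of_isClosed isClosed_Icc isClosed_singleton).csInf_mem
      ⟨τ₀, hτ₀, rfl⟩ hS_bdd
  refine ⟨sInf S, hτ, fun s hs => hfτ ▸ hmin hs, fun s hs => ?_⟩
  have hsT : s ∈ Icc t T := ⟨hs.1, hs.2.le.trans hτ.2⟩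
  exact hfτ ▸ (hmin hsT).lt_of_ne fun h => hs.2.not_ge (csInf_le hS_bdd ⟨hsT, h.symm⟩)

theorem exists_mem_Ico_intervalIntegral_lt {f : ℝ → ℝ} {t τ ε : ℝ}
    (hf : IntervalIntegrable f volume t τ) (htτ : t < τ) (hε : 0 < ε) :
    ∃ σ ∈ Ico t τ, ∫ s in σ..τ, f s < ε := by
  have hcont : ContinuousWithinAt (fun σ => ∫ s in σ..τ, f s) (Icc t τ) τ := by
    have := continuousOn_primitive_interval_left ((intervalIntegrable_iff').1 hf)
    rw [uIcc_of_le htτ.le] at this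
    exact this τ (right_mem_Icc.2 htτ.le)
  have hlim : Tendsto (fun σ => ∫ s in σ..τ, f s) (𝓝[<] τ) (𝓝 0) := by
    rw [← nhdsWithin_Ico_eq_nhdsLT htτ, ← integral_same (f := f) (a := τ)]
    exact hcont.mono Ico_subset_Icc_self
  exact ((hlim.eventually_lt_const hε).and (Ico_mem_nhdsLT htτ)).exists.imp fun σ h => ⟨h.2, h.1⟩

theorem IntervalIntegrable.mono_of_mem_Icc {f : ℝ → ℝ} {t T σ τ : ℝ}
    (hf : IntervalIntegrable f volume t T) (hσ : σ ∈ Icc t T) (hτ : τ ∈ Icc t T) :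
    IntervalIntegrable f volume σ τ :=
  hf.mono_set (uIcc_subset_uIcc (Icc_subset_uIcc hσ) (Icc_subset_uIcc hτ))

section Consensus

variable {ι : Type*} [Fintype ι] {a : ι → ι → ℝ → ℝ} {x : ι → ℝ → ℝ} {t T : ℝ}

/-- Carathéodory solutions of `ẋ = -L(s) x` on `[t, T]`, since `-(L x)ᵢ = ∑ⱼ aᵢⱼ (xⱼ - xᵢ)`. -/
def IsConsensusSolution (a : ι → ι → ℝ → ℝ) (t T : ℝ) (x : ι → ℝ → ℝ) : Prop :=
  ∀ i τ, τ ∈ Icc t T → x i τ = x i t + ∫ s in t..τ, ∑ j, a i j s * (x j s - x i s)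

theorem intervalIntegrable_sum_weights (ha_int : ∀ i j, IntervalIntegrable (a i j) volume t T)
    (i : ι) : IntervalIntegrable (fun s => ∑ j, a i j s) volume t T := by
  simpa only [Finset.sum_fn] using IntervalIntegrable.sum Finset.univ fun j _ => ha_int i j

theorem intervalIntegrable_consensus_field (ha_int : ∀ i j, IntervalIntegrable (a i j) volume t T)
    (hx : ∀ i, Continuous (x i)) (i : ι) :
    IntervalIntegrable (fun s => ∑ j, a i j s * (x j s - x i s)) volume t T := by
  simpa only [Finset.sum_fn, Pi.sub_apply] using IntervalIntegrable.sum Finset.univ fun j _ =>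
    (ha_int i j).mul_continuousOn ((hx j).sub (hx i)).continuousOn

namespace IsConsensusSolution

theorem sub_eq_integral (hsol : IsConsensusSolution a t T x)
    (ha_int : ∀ i j, IntervalIntegrable (a i j) volume t T) (hx : ∀ i, Continuous (x i)) (i : ι)
    {σ τ : ℝ} (hσ : σ ∈ Icc t T) (hτ : τ ∈ Icc t T) :
    x i τ - x i σ = ∫ s in σ..τ, ∑ j, a i j s * (x j s - x i s) := by
  have hf := intervalIntegrable_consensus_field ha_int hx i
  have ht : t ∈ Icc t T := left_mem_Icc.2 (hσ.1.trans hσ.2)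
  rw [hsol i τ hτ, hsol i σ hσ,
    ← integral_interval_sub_left (hf.mono_of_mem_Icc ht hτ) (hf.mono_of_mem_Icc ht hσ)]
  ring

theorem mul_integral_le_sub (hsol : IsConsensusSolution a t T x)
    (ha_nonneg : ∀ i j s, 0 ≤ a i j s) (ha_int : ∀ i j, IntervalIntegrable (a i j) volume t T)
    (hx : ∀ i, Continuous (x i)) (i : ι) {σ τ μ M : ℝ} (hσ : σ ∈ Icc t T) (hτ : τ ∈ Icc t T)
    (hστ : σ ≤ τ) (hμ : ∀ j, ∀ s ∈ Icc σ τ, μ ≤ x j s) (hM : ∀ s ∈ Icc σ τ, x i s ≤ M) :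
    (μ - M) * ∫ s in σ..τ, ∑ j, a i j s ≤ x i τ - x i σ := by
  rw [hsol.sub_eq_integral ha_int hx i hσ hτ, ← intervalIntegral.integral_const_mul]
  refine integral_mono_on hστ
    (((intervalIntegrable_sum_weights ha_int i).mono_of_mem_Icc hσ hτ).const_mul _)
    ((intervalIntegrable_consensus_field ha_int hx i).mono_of_mem_Icc hσ hτ) fun s hs => ?_
  rw [Finset.mul_sum]
  refine Finset.sum_le_sum fun j _ => ?_
  rw [mul_comm]
  exact mul_le_mul_of_nonneg_left (by linarith [hμ j s hs, hM s hs]) (ha_nonneg i j s)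

theorem nonneg (hsol : IsConsensusSolution a t T x) (ha_nonneg : ∀ i j s, 0 ≤ a i j s)
    (ha_int : ∀ i j, IntervalIntegrable (a i j) volume t T) (hx : ∀ i, Continuous (x i))
    (h₀ : ∀ i, 0 ≤ x i t) : ∀ i, ∀ τ ∈ Icc t T, 0 ≤ x i τ := by
  by_contra! ⟨i₀, τ₀, hτ₀, hneg⟩
  have hne : (Finset.univ : Finset ι).Nonempty := ⟨i₀, Finset.mem_univ i₀⟩
  set m : ℝ → ℝ := fun s => Finset.univ.inf' hne fun j => x j s
  obtain ⟨τ, hτ, hmin, hfirst⟩ := exists_first_isMinOn_Icc (hτ₀.1.trans hτ₀.2)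
    (Continuous.finset_inf'_apply hne fun j _ => hx j).continuousOn
  obtain ⟨i, -, hi : m τ = x i τ⟩ := Finset.exists_mem_eq_inf' hne fun j => x j τ
  have hlow : ∀ j, ∀ s ∈ Icc t T, m τ ≤ x j s :=
    fun j s hs => (hmin hs).trans (Finset.inf'_le _ (Finset.mem_univ j))
  have htτ : t < τ := by
    refine hτ.1.lt_of_ne fun htτ => (hneg.trans_le' (hlow i₀ τ₀ hτ₀)).not_ge ?_
    exact htτ ▸ Finset.le_inf' hne _ fun j _ => h₀ j
  have hweights := intervalIntegrable_sum_weights ha_int i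
  obtain ⟨σ, hσ, hR⟩ := exists_mem_Ico_intervalIntegral_lt
    (hweights.mono_of_mem_Icc (left_mem_Icc.2 (htτ.le.trans hτ.2)) hτ) htτ one_pos
  have hsub : Icc σ τ ⊆ Icc t T := Icc_subset_Icc hσ.1 hτ.2
  obtain ⟨σ₁, hσ₁, hmax⟩ :=
    isCompact_Icc.exists_isMaxOn (nonempty_Icc.2 hσ.2.le) (hx i).continuousOn
  have hinc := hsol.mul_integral_le_sub ha_nonneg ha_int hx i (hsub hσ₁) hτ hσ₁.2
    (fun j s hs => hlow j s (hsub (Icc_subset_Icc_left hσ₁.1 hs)))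
    (fun s hs => hmax (Icc_subset_Icc_left hσ₁.1 hs))
  have hR₁ : ∫ s in σ₁..τ, ∑ j, a i j s ≤ ∫ s in σ..τ, ∑ j, a i j s :=
    integral_mono_interval hσ₁.1 hσ₁.2 le_rfl
      (Eventually.of_forall fun s => Finset.sum_nonneg fun j _ => ha_nonneg i j s)
      (hweights.mono_of_mem_Icc (hsub (left_mem_Icc.2 hσ.2.le)) hτ)
  have hM : x i σ₁ ≤ m τ := by nlinarith
  have hmσ : m σ ≤ x i σ := Finset.inf'_le _ (Finset.mem_univ i)
  have hσσ₁ : x i σ ≤ x i σ₁ := hmax (left_mem_Icc.2 hσ.2.le)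
  linarith [hfirst σ hσ]

end IsConsensusSolution

end Consensus

/-- The fundamental matrix `Φ(t,T)` of the consensus flow
`ẋ = -L(s)x` (i.e. the matrix satisfying `x(T) = Φ ⬝ x(t)` for every
Carathéodory solution of the integral consensus equation) is row-stochastic:
nonnegative entries with unit row sums. -/
theorem fundamental_matrix_row_stochastic
    (n : ℕ) (t T : ℝ) (htT : t ≤ T)
    (a : Fin n → Fin n → ℝ → ℝ)
    (ha_nonneg : ∀ i j s, 0 ≤ a i j s)
    (ha_int : ∀ i j, IntervalIntegrable (a i j) MeasureTheory.volume t T)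
    (Φ : Matrix (Fin n) (Fin n) ℝ)
    -- Φ maps the state at time t of any solution to its state at time T
    (hΦ : ∀ x : Fin n → ℝ → ℝ, (∀ i, Continuous (x i)) →
      (∀ i τ, τ ∈ Set.Icc t T →
        x i τ = x i t + ∫ s in t..τ, ∑ j, a i j s * (x j s - x i s)) →
      (fun i => x i T) = Φ.mulVec (fun i => x i t))
    -- solutions exist from every initial condition at time t
    (hexists : ∀ v : Fin n → ℝ, ∃ x : Fin n → ℝ → ℝ,
      (∀ i, Continuous (x i)) ∧ (∀ i, x i t = v i) ∧
      (∀ i τ, τ ∈ Set.Icc t T →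
        x i τ = x i t + ∫ s in t..τ, ∑ j, a i j s * (x j s - x i s))) :
    (∀ i j, 0 ≤ Φ i j) ∧ (∀ i, ∑ j, Φ i j = 1) := by
  refine ⟨fun i j => ?_, fun i => ?_⟩
  · obtain ⟨x, hx, hx₀, hsol⟩ := hexists (Pi.single j 1)
    have hΦx : x i T = Φ i j := by
      simpa [funext hx₀, Matrix.mulVec_single] using congrFun (hΦ x hx hsol) i
    have he : (0 : Fin n → ℝ) ≤ Pi.single j 1 := Pi.single_nonneg.2 zero_le_one
    rw [← hΦx]
    exact IsConsensusSolution.nonneg hsol ha_nonneg ha_int hx (fun k => hx₀ k ▸ he k) i T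
      ⟨htT, le_rfl⟩
  · simpa [Matrix.mulVec, dotProduct] using
      (congrFun (hΦ (fun _ _ => 1) (fun _ => continuous_const) (by simp)) i).symm
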